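/- arXiv:2205.03375 — 8 statements merged into one kernel-verified Lean document; each statement's English description precedes it below -/
import Mathlib

section
/- Let U and U' be two presence-influencing sets for X under θ. Then U ∩ U' is also a presence-influencing set for X under θ. -/
open Classical in
/-- θ̃_X(h): the sum of θ h x over labels x in X. -/
noncomputable def thetaSum {L : Type*} [Fintype L] (θ : List L → L → ℝ)
    (X : Set L) (h : List L) : ℝ :=
  ∑ x ∈ Finset.univ.filter (· ∈ X), θ h x

/-- The presence summary of history h w.r.t. label set U:
the set of labels of U occurring as entries of h. -/
def presenceSummary {L : Type*} (U : Set L) (h : List L) : Set L :=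
  {u | u ∈ U ∧ u ∈ h}

/-- U is a presence-influencing set for X under θ. -/
def PresenceInfluencing {L : Type*} [Fintype L] (θ : List L → L → ℝ)
    (X U : Set L) : Prop :=
  ∀ h h' : List L, presenceSummary U h = presenceSummary U h' →
    thetaSum θ X h = thetaSum θ X h'

theorem presence_influencing_inter {L : Type*} [Fintype L]
    (θ : List L → L → ℝ)
    (hnn : ∀ (h : List L) (x : L), 0 ≤ θ h x)
    (hsum : ∀ h : List L, ∑ x, θ h x = 1)
    (X U U' : Set L)
    (hU : PresenceInfluencing θ X U)
    (hU' : PresenceInfluencing θ X U') :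
    PresenceInfluencing θ X (U ∩ U') := by
  classical
  intro h h' hs
  have hs' := Set.ext_iff.mp hs
  simp only [presenceSummary, Set.mem_inter_iff, Set.mem_setOf_eq] at hs'
  set g : List L := (h.filter (fun x => decide (x ∈ U))) ++
      (h'.filter (fun x => decide (x ∈ U'))) with hg
  have hmem : ∀ u, u ∈ g ↔ (u ∈ h ∧ u ∈ U) ∨ (u ∈ h' ∧ u ∈ U') := by
    intro u
    simp [hg, List.mem_append, List.mem_filter, and_comm]
  have e1 : presenceSummary U h = presenceSummary U g := by
    ext u
    simp only [presenceSummary, Set.mem_setOf_eq, hmem]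
    constructor
    · rintro ⟨hu, huh⟩; exact ⟨hu, Or.inl ⟨huh, hu⟩⟩
    · rintro ⟨hu, h1 | h2⟩
      · exact ⟨hu, h1.1⟩
      · exact ⟨hu, ((hs' u).mpr ⟨⟨hu, h2.2⟩, h2.1⟩).2⟩
  have e2 : presenceSummary U' g = presenceSummary U' h' := by
    ext u
    simp only [presenceSummary, Set.mem_setOf_eq, hmem]
    constructor
    · rintro ⟨hu, h1 | h2⟩
      · exact ⟨hu, ((hs' u).mp ⟨⟨h1.2, hu⟩, h1.1⟩).2⟩
      · exact ⟨hu, h2.1⟩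
    · rintro ⟨hu, huh⟩; exact ⟨hu, Or.inr ⟨huh, hu⟩⟩
  calc thetaSum θ X h = thetaSum θ X g := hU h g e1
    _ = thetaSum θ X h' := hU' g h' e2
end

section
/- Call a presence-influencing set U for X minimal if no proper subset of U is a presence-influencing set for X. Then any two minimal presence-influencing sets for X under the same parameterization θ are equal (Theorem 1 of the paper, instantiated to the binary-presence summary function). -/
theorem minimal_presence_influencing_unique {L : Type*} [Fintype L]
    (θ : List L → L → ℝ)
    (hnn : ∀ (h : List L) (x : L), 0 ≤ θ h x)
    (hsum : ∀ h : List L, ∑ x, θ h x = 1)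
    (X U U' : Set L)
    (hU : PresenceInfluencing θ X U)
    (hUmin : ∀ V ⊂ U, ¬ PresenceInfluencing θ X V)
    (hU' : PresenceInfluencing θ X U')
    (hU'min : ∀ V ⊂ U', ¬ PresenceInfluencing θ X V) :
    U = U' := by
  classical
  have key : ∀ A B : Set L, PresenceInfluencing θ X A → PresenceInfluencing θ X B →
      PresenceInfluencing θ X (A ∩ B) := by
    intro A B hA hB h h' hps
    -- canonical reduction
    set g : List L := h.filter (fun x => decide (x ∈ B)) with hg
    set g2 : List L := g.filter (fun x => decide (x ∈ A)) with hg2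
    set g' : List L := h'.filter (fun x => decide (x ∈ B)) with hg'
    set g2' : List L := g'.filter (fun x => decide (x ∈ A)) with hg2'
    have e1 : thetaSum θ X h = thetaSum θ X g := by
      apply hB
      ext u
      simp [presenceSummary, hg, List.mem_filter]
      tauto
    have e2 : thetaSum θ X g = thetaSum θ X g2 := by
      apply hA
      ext u
      simp [presenceSummary, hg2, List.mem_filter]
      tauto
    have e1' : thetaSum θ X h' = thetaSum θ X g' := by
      apply hB
      ext u
      simp [presenceSummary, hg', List.mem_filter]
      tauto
    have e2' : thetaSum θ X g' = thetaSum θ X g2' := by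
      apply hA
      ext u
      simp [presenceSummary, hg2', List.mem_filter]
      tauto
    have emid : thetaSum θ X g2 = thetaSum θ X g2' := by
      apply hA
      have h1 : presenceSummary A g2 = presenceSummary (A ∩ B) h := by
        ext u
        simp [presenceSummary, hg2, hg, List.mem_filter]
        tauto
      have h2 : presenceSummary A g2' = presenceSummary (A ∩ B) h' := by
        ext u
        simp [presenceSummary, hg2', hg', List.mem_filter]
        tauto
      rw [h1, h2, hps]
    rw [e1, e2, emid, ← e2', ← e1']
  have hUU' : U ∩ U' = U := by
    by_contra hne
    exact hUmin (U ∩ U') (ssubset_iff_subset_ne.mpr ⟨Set.inter_subset_left, hne⟩)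
      (key U U' hU hU')
  have hU'U : U' ∩ U = U' := by
    by_contra hne
    exact hU'min (U' ∩ U) (ssubset_iff_subset_ne.mpr ⟨Set.inter_subset_left, hne⟩)
      (key U' U hU' hU)
  have hs1 : U ⊆ U' := by
    intro x hx
    have := hUU' ▸ hx
    exact ((Set.mem_inter_iff _ _ _).1 (hUU'.symm ▸ hx)).2
  have hs2 : U' ⊆ U := by
    intro x hx
    exact ((Set.mem_inter_iff _ _ _).1 (hU'U.symm ▸ hx)).2
  exact Set.Subset.antisymm hs1 hs2
end

section
/- Suppose at least one presence-influencing set for X under θ exists. Then the intersection of all presence-influencing sets for X is itself a presence-influencing set for X, and it is contained in every presence-influencing set for X; in particular it is the unique minimal presence-influencing set for X. -/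
section Splice

variable {L : Type*} {U V : Set L} {h h' : List L}

lemma presenceSummary_eq_iff :
    presenceSummary U h = presenceSummary U h' ↔ ∀ u ∈ U, u ∈ h ↔ u ∈ h' := by
  simp only [presenceSummary, Set.ext_iff, Set.mem_ofPred_eq]
  exact forall_congr' fun u ↦ ⟨fun h hu ↦ by simpa [hu] using h, fun h ↦ by grind⟩

open Classical in
noncomputable def splice (U V : Set L) (h h' : List L) : List L :=
  h.filter (· ∈ U) ++ h'.filter (· ∈ V)

lemma mem_splice {a : L} : a ∈ splice U V h h' ↔ (a ∈ h ∧ a ∈ U) ∨ (a ∈ h' ∧ a ∈ V) := by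
  simp [splice]

lemma presenceSummary_splice_left
    (hUV : presenceSummary (U ∩ V) h = presenceSummary (U ∩ V) h') :
    presenceSummary U (splice U V h h') = presenceSummary U h := by
  rw [presenceSummary_eq_iff] at hUV ⊢
  exact fun u hu ↦ by have := hUV u; grind [mem_splice]

lemma presenceSummary_splice_right
    (hUV : presenceSummary (U ∩ V) h = presenceSummary (U ∩ V) h') :
    presenceSummary V (splice U V h h') = presenceSummary V h' := by
  rw [presenceSummary_eq_iff] at hUV ⊢
  exact fun v hv ↦ by have := hUV v; grind [mem_splice]

end Splice

section Influencing

variable {L : Type*} [Fintype L] {θ : List L → L → ℝ} {X : Set L}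

lemma PresenceInfluencing.inter {U V : Set L}
    (hU : PresenceInfluencing θ X U) (hV : PresenceInfluencing θ X V) :
    PresenceInfluencing θ X (U ∩ V) := fun _ _ hUV ↦
  (hU _ _ (presenceSummary_splice_left hUV)).symm.trans (hV _ _ (presenceSummary_splice_right hUV))

lemma infClosed_presenceInfluencing : InfClosed {U | PresenceInfluencing θ X U} :=
  fun _ hU _ hV ↦ hU.inter hV

lemma presenceInfluencing_sInter (hex : ∃ U, PresenceInfluencing θ X U) :
    PresenceInfluencing θ X (⋂₀ {V : Set L | PresenceInfluencing θ X V}) :=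
  infClosed_presenceInfluencing.sInf_mem_of_nonempty (Set.toFinite _) hex subset_rfl

end Influencing

theorem sInter_presence_influencing_general {L : Type*} [Fintype L]
    (θ : List L → L → ℝ)
    (X : Set L)
    (hex : ∃ U : Set L, PresenceInfluencing θ X U) :
    PresenceInfluencing θ X (⋂₀ {V : Set L | PresenceInfluencing θ X V}) ∧
    (∀ V : Set L, PresenceInfluencing θ X V →
      ⋂₀ {V : Set L | PresenceInfluencing θ X V} ⊆ V) ∧
    (∀ W : Set L, PresenceInfluencing θ X W →
      (∀ W' ⊂ W, ¬ PresenceInfluencing θ X W') →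
      W = ⋂₀ {V : Set L | PresenceInfluencing θ X V}) := by
  have hmem := presenceInfluencing_sInter hex
  refine ⟨hmem, fun V hV ↦ Set.sInter_subset_of_mem hV, fun W hW hmin ↦ ?_⟩
  have hsub : ⋂₀ {V : Set L | PresenceInfluencing θ X V} ⊆ W := Set.sInter_subset_of_mem hW
  exact (hsub.ssubset_or_eq.resolve_left fun hss ↦ hmin _ hss hmem).symm

theorem sInter_presence_influencing {L : Type*} [Fintype L]
    (θ : List L → L → ℝ)
    (hnn : ∀ (h : List L) (x : L), 0 ≤ θ h x)
    (hsum : ∀ h : List L, ∑ x, θ h x = 1)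
    (X : Set L)
    (hex : ∃ U : Set L, PresenceInfluencing θ X U) :
    PresenceInfluencing θ X (⋂₀ {V : Set L | PresenceInfluencing θ X V}) ∧
    (∀ V : Set L, PresenceInfluencing θ X V →
      ⋂₀ {V : Set L | PresenceInfluencing θ X V} ⊆ V) ∧
    (∀ W : Set L, PresenceInfluencing θ X W →
      (∀ W' ⊂ W, ¬ PresenceInfluencing θ X W') →
      W = ⋂₀ {V : Set L | PresenceInfluencing θ X V}) :=
  sInter_presence_influencing_general θ X hex
end

section
/- If U and U' are presence-influencing sets for X under θ and U ∩ U' = ∅, then θ̃_X is constant, i.e., θ̃_X(h) = θ̃_X(h') for all histories h, h' (equivalently, the empty set is a presence-influencing set for X). -/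
theorem disjoint_presence_influencing_const {L : Type*} [Fintype L]
    (θ : List L → L → ℝ)
    (hnn : ∀ (h : List L) (x : L), 0 ≤ θ h x)
    (hsum : ∀ h : List L, ∑ x, θ h x = 1)
    (X U U' : Set L)
    (hU : PresenceInfluencing θ X U)
    (hU' : PresenceInfluencing θ X U')
    (hdisj : U ∩ U' = ∅) :
    ∀ h h' : List L, thetaSum θ X h = thetaSum θ X h' := by
  classical
  have key : ∀ h : List L, thetaSum θ X h = thetaSum θ X [] := by
    intro h
    set g := h.filter (fun x => decide (x ∉ U)) with hg
    have h1 : presenceSummary U' h = presenceSummary U' g := by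
      ext u
      simp only [presenceSummary, Set.mem_setOf_eq, hg, List.mem_filter, decide_eq_true_eq]
      constructor
      · rintro ⟨hu, hh⟩
        exact ⟨hu, hh, fun hU0 => Set.eq_empty_iff_forall_notMem.mp hdisj u ⟨hU0, hu⟩⟩
      · rintro ⟨hu, hh, _⟩; exact ⟨hu, hh⟩
    have h2 : presenceSummary U g = presenceSummary U [] := by
      ext u
      simp [presenceSummary, hg, List.mem_filter]
    calc thetaSum θ X h = thetaSum θ X g := hU' h g h1
      _ = thetaSum θ X [] := hU g [] h2
  intro h h'
  rw [key h, key h']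
end

section
/- Let U and U' be two order-influencing sets for X under θ. Then U ∩ U' is also an order-influencing set for X under θ. -/
open Classical in
/-- The order summary of history h w.r.t. label set U: the list of distinct
labels of U occurring in h, arranged in the order of their last occurrences. -/
noncomputable def orderSummary {L : Type*} [DecidableEq L] (U : Set L)
    (h : List L) : List L :=
  ((h.filter (fun x => decide (x ∈ U))).reverse.dedup).reverse

/-- U is an order-influencing set for X under θ. -/
def OrderInfluencing {L : Type*} [Fintype L] [DecidableEq L]
    (θ : List L → L → ℝ) (X U : Set L) : Prop :=
  ∀ h h' : List L, orderSummary U h = orderSummary U h' →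
    thetaSum θ X h = thetaSum θ X h'

/-! Write `σ_U` for `orderSummary U`. Since `σ_U` is idempotent, `U` is order-influencing
exactly when `θ̃_X (σ_U h) = θ̃_X h` for every history `h`. Moreover `σ_{U'} ∘ σ_U = σ_{U ∩ U'}`
(filtering commutes with deduplication), so
`θ̃_X (σ_{U ∩ U'} h) = θ̃_X (σ_{U'} (σ_U h)) = θ̃_X (σ_U h) = θ̃_X h`. -/

theorem List.dedup_filter {α : Type*} [DecidableEq α] (p : α → Bool) (l : List α) :
    (l.filter p).dedup = l.dedup.filter p := by
  induction l with
  | nil => rfl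
  | cons a l ih =>
    by_cases ha : a ∈ l <;> by_cases hp : p a <;>
      simp [List.dedup_cons_of_mem, List.dedup_cons_of_notMem, ha, hp, ih]

open Classical in
theorem orderSummary_orderSummary {α : Type*} [DecidableEq α] (V W : Set α) (l : List α) :
    orderSummary W (orderSummary V l) = orderSummary (V ∩ W) l := by
  simp only [orderSummary, List.filter_reverse, List.reverse_reverse, ← List.dedup_filter,
    List.dedup_idem, List.filter_filter, Set.mem_inter_iff, Bool.decide_and, Bool.and_comm]

theorem orderSummary_idem {α : Type*} [DecidableEq α] (V : Set α) (l : List α) :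
    orderSummary V (orderSummary V l) = orderSummary V l := by
  rw [orderSummary_orderSummary, Set.inter_self]

theorem orderInfluencing_iff {L : Type*} [Fintype L] [DecidableEq L]
    (θ : List L → L → ℝ) (X U : Set L) :
    OrderInfluencing θ X U ↔ ∀ h, thetaSum θ X (orderSummary U h) = thetaSum θ X h := by
  refine ⟨fun hU h => hU _ _ (orderSummary_idem U h), fun hU h h' hhh' => ?_⟩
  rw [← hU h, hhh', hU]

theorem order_influencing_inter_general {L : Type*} [Fintype L] [DecidableEq L]
    (θ : List L → L → ℝ)
    (X U U' : Set L)
    (hU : OrderInfluencing θ X U)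
    (hU' : OrderInfluencing θ X U') :
    OrderInfluencing θ X (U ∩ U') := by
  rw [orderInfluencing_iff] at hU hU' ⊢
  intro h
  calc thetaSum θ X (orderSummary (U ∩ U') h)
      = thetaSum θ X (orderSummary U' (orderSummary U h)) := by rw [orderSummary_orderSummary]
    _ = thetaSum θ X h := by rw [hU', hU]

theorem order_influencing_inter {L : Type*} [Fintype L] [DecidableEq L]
    (θ : List L → L → ℝ)
    (hnn : ∀ (h : List L) (x : L), 0 ≤ θ h x)
    (hsum : ∀ h : List L, ∑ x, θ h x = 1)
    (X U U' : Set L)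
    (hU : OrderInfluencing θ X U)
    (hU' : OrderInfluencing θ X U') :
    OrderInfluencing θ X (U ∩ U') :=
  order_influencing_inter_general θ X U U' hU hU'
end

section
/- Let U, U' ⊆ L and let h, h' : List L be two histories whose presence summaries with respect to U ∩ U' are equal, i.e., {u ∈ U ∩ U' | u occurs in h} = {u ∈ U ∩ U' | u occurs in h'}. Then there exists a history g : List L with {u ∈ U | u occurs in g} = {u ∈ U | u occurs in h} and {u ∈ U' | u occurs in g} = {u ∈ U' | u occurs in h'}. -/
theorem presence_summary_merge {L : Type*} [DecidableEq L]
    (U U' : Set L) (h h' : List L)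
    (hps : presenceSummary (U ∩ U') h = presenceSummary (U ∩ U') h') :
    ∃ g : List L,
      presenceSummary U g = presenceSummary U h ∧
      presenceSummary U' g = presenceSummary U' h' := by
  classical
  have key : ∀ u, (u ∈ U ∧ u ∈ U') → (u ∈ h ↔ u ∈ h') := by
    intro u hu
    have := Set.ext_iff.mp hps u
    simp [presenceSummary, hu.1, hu.2, Set.mem_inter_iff] at this
    exact this
  refine ⟨(h.filter fun x => decide (x ∉ U')) ++
          (h'.filter fun x => decide (x ∉ U)) ++
          (h.filter fun x => decide (x ∈ U ∧ x ∈ U')), ?_, ?_⟩ <;>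
  · ext u
    simp only [presenceSummary, Set.mem_setOf_eq, List.mem_append, List.mem_filter,
      decide_eq_true_eq]
    have k := key u
    tauto
end

section
/- Let U, U' ⊆ L, let a : List L be a duplicate-free list all of whose entries lie in U, and let b : List L be a duplicate-free list all of whose entries lie in U'. If a.filter (· ∈ U') = b.filter (· ∈ U), then there exists a duplicate-free list c : List L, all of whose entries lie in U ∪ U', such that c.filter (· ∈ U) = a and c.filter (· ∈ U') = b. -/
private lemma nodup_merge_aux {L : Type*} [DecidableEq L]
    (U U' : Set L) [DecidablePred (· ∈ U)] [DecidablePred (· ∈ U')] :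
    ∀ (n : ℕ) (a b : List L), a.length + b.length ≤ n → a.Nodup → b.Nodup →
    (∀ x ∈ a, x ∈ U) → (∀ x ∈ b, x ∈ U') →
    a.filter (fun x => decide (x ∈ U')) = b.filter (fun x => decide (x ∈ U)) →
    ∃ c : List L, c.Nodup ∧ (∀ x ∈ c, x ∈ a ∨ x ∈ b) ∧
      c.filter (fun x => decide (x ∈ U)) = a ∧
      c.filter (fun x => decide (x ∈ U')) = b := by
  intro n
  induction n with
  | zero =>
    intro a b hlen _ _ _ _ _
    have ha0 : a = [] := List.eq_nil_of_length_eq_zero (by omega)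
    have hb0 : b = [] := List.eq_nil_of_length_eq_zero (by omega)
    subst ha0; subst hb0
    exact ⟨[], by simp⟩
  | succ n ih =>
    intro a b hlen ha hb haU hbU' hagree
    match a, b with
    | [], b =>
      refine ⟨b, hb, fun x hx => Or.inr hx, ?_, List.filter_eq_self.mpr (by simpa using hbU')⟩
      simpa using hagree.symm
    | x :: a', [] =>
      refine ⟨x :: a', ha, fun y hy => Or.inl hy, List.filter_eq_self.mpr (by simpa using haU), ?_⟩
      simpa using hagree
    | x :: a', y :: b' =>
      by_cases hxU' : x ∈ U'
      · by_cases hyU : y ∈ U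
        · -- heads both shared
          have hx : x ∈ U := haU x (by simp)
          have hy' : y ∈ U' := hbU' y (by simp)
          rw [List.filter_cons_of_pos (by simpa using hxU'),
              List.filter_cons_of_pos (by simpa using hyU)] at hagree
          obtain ⟨hxy, htail⟩ := List.cons_eq_cons.mp hagree
          subst hxy
          obtain ⟨c, hcnd, hcmem, hcU, hcU'⟩ := ih a' b' (by simp at hlen ⊢; omega)
            ha.of_cons hb.of_cons (fun z hz => haU z (by simp [hz]))
            (fun z hz => hbU' z (by simp [hz])) htail
          refine ⟨x :: c, ?_, ?_, ?_, ?_⟩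
          · refine List.nodup_cons.mpr ⟨fun hxc => ?_, hcnd⟩
            rcases hcmem x hxc with h | h
            · exact (List.nodup_cons.mp ha).1 h
            · exact (List.nodup_cons.mp hb).1 h
          · intro z hz
            rcases List.mem_cons.mp hz with rfl | hz
            · exact Or.inl (by simp)
            · rcases hcmem z hz with h | h
              · exact Or.inl (by simp [h])
              · exact Or.inr (by simp [h])
          · rw [List.filter_cons_of_pos (by simpa using hx), hcU]
          · rw [List.filter_cons_of_pos (by simpa using hxU'), hcU']
        · -- y ∉ U : y only in b
          have hy' : y ∈ U' := hbU' y (by simp)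
          have hyf : (y :: b').filter (fun z => decide (z ∈ U)) =
              b'.filter (fun z => decide (z ∈ U)) := by
            simp [List.filter_cons, hyU]
          rw [hyf] at hagree
          obtain ⟨c, hcnd, hcmem, hcU, hcU'⟩ := ih (x :: a') b' (by simp at hlen ⊢; omega)
            ha hb.of_cons haU (fun z hz => hbU' z (by simp [hz])) hagree
          refine ⟨y :: c, ?_, ?_, ?_, ?_⟩
          · refine List.nodup_cons.mpr ⟨fun hyc => ?_, hcnd⟩
            rcases hcmem y hyc with h | h
            · exact hyU (haU y h)
            · exact (List.nodup_cons.mp hb).1 h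
          · intro z hz
            rcases List.mem_cons.mp hz with rfl | hz
            · exact Or.inr (by simp)
            · rcases hcmem z hz with h | h
              · exact Or.inl h
              · exact Or.inr (by simp [h])
          · rw [List.filter_cons_of_neg (by simpa using hyU), hcU]
          · rw [List.filter_cons_of_pos (by simpa using hy'), hcU']
      · -- x ∉ U' : x only in a
        have hx : x ∈ U := haU x (by simp)
        rw [List.filter_cons_of_neg (by simpa using hxU')] at hagree
        obtain ⟨c, hcnd, hcmem, hcU, hcU'⟩ := ih a' (y :: b') (by simp at hlen ⊢; omega)
          ha.of_cons hb (fun z hz => haU z (by simp [hz])) hbU' hagree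
        refine ⟨x :: c, ?_, ?_, ?_, ?_⟩
        · refine List.nodup_cons.mpr ⟨fun hxc => ?_, hcnd⟩
          rcases hcmem x hxc with h | h
          · exact (List.nodup_cons.mp ha).1 h
          · exact hxU' (hbU' x h)
        · intro z hz
          rcases List.mem_cons.mp hz with rfl | hz
          · exact Or.inl (by simp)
          · rcases hcmem z hz with h | h
            · exact Or.inl (by simp [h])
            · exact Or.inr h
        · rw [List.filter_cons_of_pos (by simpa using hx), hcU]
        · rw [List.filter_cons_of_neg (by simpa using hxU'), hcU']

theorem nodup_merge_lemma {L : Type*} [DecidableEq L]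
    (U U' : Set L) [DecidablePred (· ∈ U)] [DecidablePred (· ∈ U')]
    (a b : List L) (ha : a.Nodup) (hb : b.Nodup)
    (haU : ∀ x ∈ a, x ∈ U) (hbU' : ∀ x ∈ b, x ∈ U')
    (hagree : a.filter (fun x => decide (x ∈ U')) =
      b.filter (fun x => decide (x ∈ U))) :
    ∃ c : List L, c.Nodup ∧ (∀ x ∈ c, x ∈ U ∪ U') ∧
      c.filter (fun x => decide (x ∈ U)) = a ∧
      c.filter (fun x => decide (x ∈ U')) = b := by
  obtain ⟨c, h1, h2, h3, h4⟩ := nodup_merge_aux U U' (a.length + b.length) a b le_rfl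
    ha hb haU hbU' hagree
  exact ⟨c, h1, fun x hx => (h2 x hx).elim (fun h => Or.inl (haU x h))
    (fun h => Or.inr (hbU' x h)), h3, h4⟩
end

section
/- Let X, S, S' be finite types, let c : S' → S be any map (a coarsening of summary states), and let N : S' → X → ℕ be counts. Define the coarsened counts M : S → X → ℕ by M s x = ∑_{s' with c s' = s} N s' x, and for counts K : T → X → ℕ over a finite type T define the maximized log-likelihood LL(K) = ∑_{t : T} ∑_{x : X, K t x > 0} (K t x : ℝ) * Real.log ((K t x : ℝ) / (∑_{y : X} K t y : ℝ)). Then LL(N) ≥ LL(M): refining the summary states (e.g., enlarging the influencing set in a summary Markov model) can never decrease the log-likelihood evaluated at the maximum-likelihood (empirical-frequency) parameter estimates. -/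
open Finset

/-- The maximized log-likelihood of counts K : T → X → ℕ at the
empirical-frequency parameter estimates; zero-count terms contribute 0. -/
noncomputable def maxLL {X T : Type*} [Fintype X] [Fintype T]
    (K : T → X → ℕ) : ℝ :=
  ∑ t : T, ∑ x ∈ Finset.univ.filter (fun x => 0 < K t x),
    (K t x : ℝ) * Real.log ((K t x : ℝ) / ((∑ y, K t y : ℕ) : ℝ))

/-- Gibbs' inequality: for counts `k` and sub-probability weights `q` positive
on the support of `k`, the empirical frequencies maximize the log-likelihood. -/
lemma gibbs_aux {X : Type*} [Fintype X] (k : X → ℕ) (q : X → ℝ)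
    (hq1 : ∑ x ∈ univ.filter (fun x => 0 < k x), q x ≤ 1)
    (hqpos : ∀ x, 0 < k x → 0 < q x) :
    ∑ x ∈ univ.filter (fun x => 0 < k x), (k x : ℝ) * Real.log (q x) ≤
    ∑ x ∈ univ.filter (fun x => 0 < k x),
      (k x : ℝ) * Real.log ((k x : ℝ) / ((∑ y, k y : ℕ) : ℝ)) := by
  classical
  by_cases hK0 : (∑ y, k y) = 0
  · have hempty : univ.filter (fun x => 0 < k x) = ∅ := by
      ext x
      simp only [mem_filter, mem_univ, true_and, notMem_empty, iff_false, not_lt,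
        Nat.le_zero]
      exact (Finset.sum_eq_zero_iff.mp hK0) x (mem_univ x)
    simp [hempty]
  · have hKpos : (0:ℝ) < ((∑ y, k y : ℕ) : ℝ) := by
      exact_mod_cast Nat.pos_of_ne_zero hK0
    set Kr : ℝ := ((∑ y, k y : ℕ) : ℝ) with hKr
    have hsum_le : ∀ x ∈ univ.filter (fun x => 0 < k x),
        (k x : ℝ) * Real.log (q x) ≤
        (k x : ℝ) * Real.log ((k x : ℝ) / Kr) + (Kr * q x - (k x : ℝ)) := by
      intro x hx
      simp only [mem_filter, mem_univ, true_and] at hx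
      have hkx : (0:ℝ) < (k x : ℝ) := by exact_mod_cast hx
      have hqx := hqpos x hx
      have harg : (0:ℝ) < q x * Kr / (k x : ℝ) := by positivity
      have hlog := Real.log_le_sub_one_of_pos harg
      have hlogeq : Real.log (q x * Kr / (k x : ℝ)) =
          Real.log (q x) - Real.log ((k x : ℝ) / Kr) := by
        rw [Real.log_div (by positivity) hkx.ne', Real.log_mul hqx.ne' hKpos.ne',
          Real.log_div hkx.ne' hKpos.ne']
        ring
      rw [hlogeq] at hlog
      have h2 := mul_le_mul_of_nonneg_left hlog hkx.le
      have hr : (k x : ℝ) * (q x * Kr / (k x : ℝ) - 1) = Kr * q x - (k x : ℝ) := by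
        field_simp
      nlinarith [h2]
    calc ∑ x ∈ univ.filter (fun x => 0 < k x), (k x : ℝ) * Real.log (q x)
        ≤ ∑ x ∈ univ.filter (fun x => 0 < k x),
            ((k x : ℝ) * Real.log ((k x : ℝ) / Kr) + (Kr * q x - (k x : ℝ))) :=
          Finset.sum_le_sum hsum_le
      _ = (∑ x ∈ univ.filter (fun x => 0 < k x), (k x : ℝ) * Real.log ((k x : ℝ) / Kr))
            + (Kr * (∑ x ∈ univ.filter (fun x => 0 < k x), q x)
               - ∑ x ∈ univ.filter (fun x => 0 < k x), (k x : ℝ)) := by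
          rw [Finset.sum_add_distrib, Finset.sum_sub_distrib, Finset.mul_sum]
      _ ≤ ∑ x ∈ univ.filter (fun x => 0 < k x), (k x : ℝ) * Real.log ((k x : ℝ) / Kr) := by
          have hKsum : ∑ x ∈ univ.filter (fun x => 0 < k x), (k x : ℝ) = Kr := by
            rw [hKr]
            push_cast
            rw [← Finset.sum_filter_ne_zero (s := univ) (f := fun x => (k x : ℝ))]
            congr 1
            ext x
            simp [Nat.pos_iff_ne_zero, Nat.cast_eq_zero]
          have := mul_le_mul_of_nonneg_left hq1 hKpos.le
          nlinarith [this, hKsum]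

/-- Merging a set `A` of rows cannot increase the maximized log-likelihood. -/
lemma fiber_le {X S' : Type*} [Fintype X] [Fintype S'] (A : Finset S') (N : S' → X → ℕ) :
    ∑ x ∈ univ.filter (fun x => 0 < (∑ s' ∈ A, N s' x)),
      ((∑ s' ∈ A, N s' x : ℕ) : ℝ) *
        Real.log (((∑ s' ∈ A, N s' x : ℕ) : ℝ) / ((∑ y, ∑ s' ∈ A, N s' y : ℕ) : ℝ)) ≤
    ∑ s' ∈ A, ∑ x ∈ univ.filter (fun x => 0 < N s' x),
      (N s' x : ℝ) * Real.log ((N s' x : ℝ) / ((∑ y, N s' y : ℕ) : ℝ)) := by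
  classical
  set m : X → ℕ := fun x => ∑ s' ∈ A, N s' x with hm
  by_cases hT0 : (∑ y, m y) = 0
  · have hmz : ∀ x, m x = 0 := fun x => (Finset.sum_eq_zero_iff.mp hT0) x (mem_univ x)
    have hNz : ∀ s' ∈ A, ∀ x, N s' x = 0 := by
      intro s' hs' x
      have := (Finset.sum_eq_zero_iff.mp (hmz x)) s' hs'
      exact this
    have h1 : univ.filter (fun x => 0 < m x) = ∅ := by
      ext x; simp [hmz x]
    rw [show (∑ x ∈ univ.filter (fun x => 0 < (∑ s' ∈ A, N s' x)),
      ((∑ s' ∈ A, N s' x : ℕ) : ℝ) *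
        Real.log (((∑ s' ∈ A, N s' x : ℕ) : ℝ) / ((∑ y, ∑ s' ∈ A, N s' y : ℕ) : ℝ))) =
      ∑ x ∈ univ.filter (fun x => 0 < m x), ((m x : ℕ) : ℝ) *
        Real.log (((m x : ℕ) : ℝ) / ((∑ y, m y : ℕ) : ℝ)) from rfl, h1]
    simp only [Finset.sum_empty]
    apply Finset.sum_nonneg
    intro s' hs'
    apply Finset.sum_nonneg
    intro x hx
    simp only [mem_filter, mem_univ, true_and] at hx
    rw [hNz s' hs' x] at hx
    exact absurd hx (lt_irrefl 0)
  · have hTpos : (0:ℝ) < ((∑ y, m y : ℕ) : ℝ) := by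
      exact_mod_cast Nat.pos_of_ne_zero hT0
    set Tr : ℝ := ((∑ y, m y : ℕ) : ℝ) with hTr
    set q : X → ℝ := fun x => (m x : ℝ) / Tr with hq
    have hq_nonneg : ∀ x, 0 ≤ q x := fun x => by positivity
    have hq_sum : ∑ x, q x = 1 := by
      have hT' : (∑ y, ((m y : ℕ) : ℝ)) ≠ 0 := by
        rw [← Nat.cast_sum]
        exact_mod_cast (Nat.cast_pos.mpr (Nat.pos_of_ne_zero hT0)).ne'
      rw [hq, ← Finset.sum_div, hTr]
      push_cast
      exact div_self hT'
    -- For each row s' in A, apply Gibbs.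
    have key : ∀ s' ∈ A,
        ∑ x ∈ univ.filter (fun x => 0 < N s' x), (N s' x : ℝ) * Real.log (q x) ≤
        ∑ x ∈ univ.filter (fun x => 0 < N s' x),
          (N s' x : ℝ) * Real.log ((N s' x : ℝ) / ((∑ y, N s' y : ℕ) : ℝ)) := by
      intro s' hs'
      apply gibbs_aux
      · calc ∑ x ∈ univ.filter (fun x => 0 < N s' x), q x
            ≤ ∑ x, q x := Finset.sum_le_sum_of_subset_of_nonneg (filter_subset _ _)
              (fun x _ _ => hq_nonneg x)
          _ = 1 := hq_sum
      · intro x hx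
        have hmx : 0 < m x := lt_of_lt_of_le hx (Finset.single_le_sum
          (f := fun s' => N s' x) (fun i _ => Nat.zero_le _) hs')
        have : (0:ℝ) < (m x : ℝ) := by exact_mod_cast hmx
        positivity
    -- Sum the per-row inequalities over A.
    have hLHS : ∑ s' ∈ A, ∑ x ∈ univ.filter (fun x => 0 < N s' x),
        (N s' x : ℝ) * Real.log (q x) =
        ∑ x ∈ univ.filter (fun x => 0 < m x), (m x : ℝ) * Real.log (q x) := by
      have h1 : ∀ s' ∈ A, ∑ x ∈ univ.filter (fun x => 0 < N s' x),
          (N s' x : ℝ) * Real.log (q x) = ∑ x, (N s' x : ℝ) * Real.log (q x) := by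
        intro s' _
        apply Finset.sum_filter_of_ne
        intro x _ hne
        by_contra h
        push_neg at h
        simp only [not_lt, Nat.le_zero] at h
        exact hne (by simp [h])
      rw [Finset.sum_congr rfl h1, Finset.sum_comm]
      rw [show (∑ x, ∑ s' ∈ A, (N s' x : ℝ) * Real.log (q x)) =
        ∑ x, (m x : ℝ) * Real.log (q x) by
          apply Finset.sum_congr rfl
          intro x _
          rw [← Finset.sum_mul, hm]
          push_cast
          rfl]
      symm
      apply Finset.sum_filter_of_ne
      intro x _ hne
      by_contra h
      push_neg at h
      simp only [not_lt, Nat.le_zero] at h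
      exact hne (by simp [h])
    have := Finset.sum_le_sum key
    rw [hLHS] at this
    refine le_trans (le_of_eq ?_) this
    apply Finset.sum_congr rfl
    intro x hx
    rfl

theorem refined_LL_ge {X S S' : Type*} [Fintype X] [Fintype S] [Fintype S']
    [DecidableEq S]
    (c : S' → S) (N : S' → X → ℕ) (M : S → X → ℕ)
    (hM : ∀ (s : S) (x : X),
      M s x = ∑ s' ∈ Finset.univ.filter (fun s' => c s' = s), N s' x) :
    maxLL N ≥ maxLL M := by
  classical
  unfold maxLL
  have step : ∀ s : S,
      ∑ x ∈ Finset.univ.filter (fun x => 0 < M s x),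
        (M s x : ℝ) * Real.log ((M s x : ℝ) / ((∑ y, M s y : ℕ) : ℝ)) ≤
      ∑ s' ∈ Finset.univ.filter (fun s' => c s' = s),
        ∑ x ∈ Finset.univ.filter (fun x => 0 < N s' x),
          (N s' x : ℝ) * Real.log ((N s' x : ℝ) / ((∑ y, N s' y : ℕ) : ℝ)) := by
    intro s
    have hMy : ∀ y, M s y = ∑ s' ∈ Finset.univ.filter (fun s' => c s' = s), N s' y :=
      hM s
    have := fiber_le (Finset.univ.filter (fun s' => c s' = s)) N (X := X)
    refine le_trans (le_of_eq ?_) this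
    apply Finset.sum_congr
    · ext x; simp [hMy x]
    · intro x _
      have hden : (∑ y, M s y) = ∑ y, ∑ s' ∈ Finset.univ.filter (fun s' => c s' = s), N s' y :=
        Finset.sum_congr rfl (fun y _ => hMy y)
      rw [hMy x, hden]
  calc ∑ s : S, ∑ x ∈ Finset.univ.filter (fun x => 0 < M s x),
        (M s x : ℝ) * Real.log ((M s x : ℝ) / ((∑ y, M s y : ℕ) : ℝ))
      ≤ ∑ s : S, ∑ s' ∈ Finset.univ.filter (fun s' => c s' = s),
          ∑ x ∈ Finset.univ.filter (fun x => 0 < N s' x),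
            (N s' x : ℝ) * Real.log ((N s' x : ℝ) / ((∑ y, N s' y : ℕ) : ℝ)) :=
        Finset.sum_le_sum (fun s _ => step s)
    _ = ∑ s' : S', ∑ x ∈ Finset.univ.filter (fun x => 0 < N s' x),
          (N s' x : ℝ) * Real.log ((N s' x : ℝ) / ((∑ y, N s' y : ℕ) : ℝ)) := by
        rw [← Finset.sum_fiberwise (g := c)]
end
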